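/- Let f : Ω×ℝ → ℝ be continuous, let g : ℝ → ℝ be continuous satisfying (g₀), and suppose M, N satisfy (h₁) with exponent α ∈ ℝ and (h₂) with exponent β ∈ ℕ ∪ {0}. If u ∈ C²(Ω) satisfies M(x, Du, D²u) + g(u) N(x, Du, D²u) + f(x, u) = 0 at every point of Ω, then v = Φ_g ∘ u satisfies M(x, Dv, D²v) + h(x, v) = 0 at every point of Ω, where h(x, s) = e^{(α+β+1)G(Φ_g⁻¹(s))} f(x, Φ_g⁻¹(s)). -/

import Mathlib

open Real Filter Set

/-- Gradient of `u` at `x` (vector of partial derivatives). -/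
noncomputable def vgrad {n : ℕ} (u : (Fin n → ℝ) → ℝ) (x : Fin n → ℝ) : Fin n → ℝ :=
  fun i => fderiv ℝ u x (Pi.single i 1)

/-- Hessian matrix of `u` at `x`. -/
noncomputable def vhess {n : ℕ} (u : (Fin n → ℝ) → ℝ) (x : Fin n → ℝ) :
    Matrix (Fin n) (Fin n) ℝ :=
  Matrix.of fun i j => fderiv ℝ (fun y => fderiv ℝ u y (Pi.single j 1)) x (Pi.single i 1)

noncomputable def Gg (g : ℝ → ℝ) (s : ℝ) : ℝ := ∫ τ in (0:ℝ)..s, g τ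

noncomputable def Phig (g : ℝ → ℝ) (t : ℝ) : ℝ := ∫ s in (0:ℝ)..t, Real.exp (Gg g s)

/-- Condition `(g₀)`. -/
def g0cond (g : ℝ → ℝ) : Prop :=
  ∃ s₀ : ℝ, 0 ≤ s₀ ∧ (∀ s, s₀ ≤ s → 0 ≤ g s) ∧ (∀ s, s ≤ -s₀ → g s ≤ 0)

/-!
With `v = Φ_g ∘ u` and `γ = Φ_g'(u) = e^{G(u)}`, the chain rule gives `Dv = γ Du` and
`D²v = γ D²u + g(u) γ (Du ⊗ Du)`, since `γ' = g γ`. Homogeneity (h₁) in the gradient and the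
affine behaviour (h₂) in the Hessian then turn `M(x, Dv, D²v)` into
`γ^{α+β+1} (M(x, Du, D²u) + g(u) N(x, Du, D²u))`, which equals `-γ^{α+β+1} f(x, u)`.
-/

open Topology

lemma hasDerivAt_Gg {g : ℝ → ℝ} (hg : Continuous g) (t : ℝ) :
    HasDerivAt (Gg g) (g t) t :=
  intervalIntegral.integral_hasDerivAt_right (hg.intervalIntegrable 0 t)
    (hg.stronglyMeasurableAtFilter _ _) hg.continuousAt

lemma hasDerivAt_exp_Gg {g : ℝ → ℝ} (hg : Continuous g) (t : ℝ) :
    HasDerivAt (fun s => exp (Gg g s)) (g t * exp (Gg g t)) t := by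
  simpa only [mul_comm] using (hasDerivAt_Gg hg t).exp

lemma continuous_exp_Gg {g : ℝ → ℝ} (hg : Continuous g) : Continuous fun s => exp (Gg g s) :=
  continuous_iff_continuousAt.2 fun t => (hasDerivAt_exp_Gg hg t).continuousAt

lemma hasDerivAt_Phig {g : ℝ → ℝ} (hg : Continuous g) (t : ℝ) :
    HasDerivAt (Phig g) (exp (Gg g t)) t :=
  intervalIntegral.integral_hasDerivAt_right ((continuous_exp_Gg hg).intervalIntegrable 0 t)
    ((continuous_exp_Gg hg).stronglyMeasurableAtFilter _ _) (continuous_exp_Gg hg).continuousAt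

section Calculus

variable {n : ℕ} {u : (Fin n → ℝ) → ℝ} {x : Fin n → ℝ}

lemma ContDiffAt.differentiableAt_fderiv (hu : ContDiffAt ℝ 2 u x) :
    DifferentiableAt ℝ (fderiv ℝ u) x :=
  (hu.fderiv_right (m := 1) le_rfl).differentiableAt one_ne_zero

lemma vhess_apply (hu : DifferentiableAt ℝ (fderiv ℝ u) x) (i j : Fin n) :
    vhess u x i j = fderiv ℝ (fderiv ℝ u) x (Pi.single i 1) (Pi.single j 1) := by
  rw [vhess, Matrix.of_apply, fderiv_clm_apply hu (differentiableAt_const _)]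
  simp

lemma isSymm_vhess (hu : ContDiffAt ℝ 2 u x) : (vhess u x).IsSymm := by
  refine Matrix.IsSymm.ext fun i j => ?_
  rw [vhess_apply hu.differentiableAt_fderiv, vhess_apply hu.differentiableAt_fderiv]
  exact hu.isSymmSndFDerivAt (by simp) _ _

lemma vgrad_comp {φ : ℝ → ℝ} {φ' : ℝ} (hφ : HasDerivAt φ φ' (u x))
    (hu : DifferentiableAt ℝ u x) : vgrad (φ ∘ u) x = φ' • vgrad u x := by
  funext i
  simp [vgrad, (hφ.comp_hasFDerivAt x hu.hasFDerivAt).fderiv]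

lemma vhess_comp {φ φ' : ℝ → ℝ} {φ'' : ℝ} (hφ : ∀ t, HasDerivAt φ (φ' t) t)
    (hφ' : HasDerivAt φ' φ'' (u x)) (hu : ContDiffAt ℝ 2 u x) :
    vhess (φ ∘ u) x
      = φ' (u x) • vhess u x + φ'' • Matrix.vecMulVec (vgrad u x) (vgrad u x) := by
  have hφ'u : HasFDerivAt (fun y => φ' (u y)) (φ'' • fderiv ℝ u x) x :=
    hφ'.comp_hasFDerivAt x (hu.differentiableAt two_ne_zero).hasFDerivAt
  ext i j
  have hDv : (fun y => fderiv ℝ (φ ∘ u) y (Pi.single j 1))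
      =ᶠ[𝓝 x] fun y => φ' (u y) * fderiv ℝ u y (Pi.single j 1) := by
    filter_upwards [hu.eventually (by simp)] with y hy
    simp [((hφ (u y)).comp_hasFDerivAt y (hy.differentiableAt two_ne_zero).hasFDerivAt).fderiv]
  have hDuj : DifferentiableAt ℝ (fun y => fderiv ℝ u y (Pi.single j 1)) x :=
    hu.differentiableAt_fderiv.clm_apply (differentiableAt_const _)
  rw [vhess, Matrix.of_apply, hDv.fderiv_eq, fderiv_fun_mul hφ'u.differentiableAt hDuj,
    hφ'u.fderiv]
  simp only [_root_.add_apply, FunLike.coe_smul, Pi.smul_apply,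
    smul_eq_mul, Matrix.add_apply, Matrix.smul_apply, Matrix.vecMulVec_apply, vhess,
    Matrix.of_apply, vgrad]
  ring

end Calculus

section StructureConditions

variable {n : ℕ} {M N : (Fin n → ℝ) → Matrix (Fin n) (Fin n) ℝ → ℝ} {α : ℝ} {β : ℕ}

lemma isSymm_vecMulVec_self (p : Fin n → ℝ) : (Matrix.vecMulVec p p).IsSymm :=
  Matrix.IsSymm.ext fun i j => by simp [Matrix.vecMulVec_apply, mul_comm]

lemma apply_smul_smul_add_smul_vecMulVec
    (h1 : ∀ lam : ℝ, lam ≠ 0 → ∀ (p : Fin n → ℝ) (X : Matrix (Fin n) (Fin n) ℝ),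
      X.IsSymm → M (lam • p) X = |lam| ^ α * M p X)
    (h2 : ∀ (p : Fin n → ℝ) (X : Matrix (Fin n) (Fin n) ℝ), X.IsSymm →
      ∀ γ : ℝ, γ ≠ 0 → ∀ σ : ℝ,
        M p (γ • X + σ • Matrix.vecMulVec p p) = γ ^ (β + 1) * M p X + σ * γ ^ β * N p X)
    {γ : ℝ} (hγ : 0 < γ) (c : ℝ) (p : Fin n → ℝ) {X : Matrix (Fin n) (Fin n) ℝ}
    (hX : X.IsSymm) :
    M (γ • p) (γ • X + (c * γ) • Matrix.vecMulVec p p)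
      = γ ^ (α + β + 1) * (M p X + c * N p X) := by
  rw [h1 γ hγ.ne' p _ ((hX.smul γ).add ((isSymm_vecMulVec_self p).smul _)),
    h2 p X hX γ hγ.ne', abs_of_pos hγ, add_assoc, rpow_add hγ,
    show (β : ℝ) + 1 = ((β + 1 : ℕ) : ℝ) by push_cast; ring, rpow_natCast, pow_succ]
  ring

end StructureConditions

theorem stmt4_general {n : ℕ} (Ω : Set (Fin n → ℝ)) (hΩ : IsOpen Ω)
    (f : (Fin n → ℝ) → ℝ → ℝ)
    (g : ℝ → ℝ) (hg : Continuous g)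
    (M N : (Fin n → ℝ) → (Fin n → ℝ) → Matrix (Fin n) (Fin n) ℝ → ℝ)
    (α : ℝ) (β : ℕ)
    (h1 : ∀ x ∈ Ω, ∀ lam : ℝ, lam ≠ 0 → ∀ (p : Fin n → ℝ) (X : Matrix (Fin n) (Fin n) ℝ),
      X.IsSymm → M x (lam • p) X = |lam| ^ α * M x p X)
    (h2 : ∀ x ∈ Ω, ∀ (p : Fin n → ℝ) (X : Matrix (Fin n) (Fin n) ℝ), X.IsSymm →
      ∀ γ : ℝ, γ ≠ 0 → ∀ σ : ℝ,
        M x p (γ • X + σ • Matrix.vecMulVec p p)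
          = γ ^ (β + 1) * M x p X + σ * γ ^ β * N x p X)
    (Φinv : ℝ → ℝ) (hleft : ∀ t : ℝ, Φinv (Phig g t) = t)
    (u : (Fin n → ℝ) → ℝ) (hu : ContDiffOn ℝ 2 u Ω)
    (hsol : ∀ x ∈ Ω,
      M x (vgrad u x) (vhess u x) + g (u x) * N x (vgrad u x) (vhess u x) + f x (u x) = 0) :
    ∀ x ∈ Ω,
      M x (vgrad (Phig g ∘ u) x) (vhess (Phig g ∘ u) x)
        + Real.exp ((α + (β : ℝ) + 1) * Gg g (Φinv ((Phig g ∘ u) x)))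
            * f x (Φinv ((Phig g ∘ u) x)) = 0 := by
  intro x hx
  have hux : ContDiffAt ℝ 2 u x := hu.contDiffAt (hΩ.mem_nhds hx)
  rw [Function.comp_apply, hleft,
    vgrad_comp (hasDerivAt_Phig hg _) (hux.differentiableAt two_ne_zero),
    vhess_comp (hasDerivAt_Phig hg) (hasDerivAt_exp_Gg hg _) hux,
    apply_smul_smul_add_smul_vecMulVec (h1 x hx) (h2 x hx) (exp_pos _) _ _ (isSymm_vhess hux),
    mul_comm _ (Gg g (u x)), exp_mul, ← mul_add, hsol x hx, mul_zero]

/-- Theorem 1, forward direction: if u ∈ C²(Ω) solves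
M(x,Du,D²u) + g(u)N(x,Du,D²u) + f(x,u) = 0, then v = Φ_g ∘ u solves
M(x,Dv,D²v) + h(x,v) = 0 with h(x,s) = e^{(α+β+1)G(Φ_g⁻¹(s))} f(x,Φ_g⁻¹(s)). -/
theorem stmt4 {n : ℕ} (Ω : Set (Fin n → ℝ)) (hΩ : IsOpen Ω)
    (f : (Fin n → ℝ) → ℝ → ℝ)
    (hf : ContinuousOn (fun q : (Fin n → ℝ) × ℝ => f q.1 q.2) (Ω ×ˢ Set.univ))
    (g : ℝ → ℝ) (hg : Continuous g) (hg0 : g0cond g)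
    (M N : (Fin n → ℝ) → (Fin n → ℝ) → Matrix (Fin n) (Fin n) ℝ → ℝ)
    (hM : ContinuousOn
      (fun q : (Fin n → ℝ) × (Fin n → ℝ) × Matrix (Fin n) (Fin n) ℝ => M q.1 q.2.1 q.2.2)
      (Ω ×ˢ Set.univ))
    (α : ℝ) (β : ℕ)
    (h1 : ∀ x ∈ Ω, ∀ lam : ℝ, lam ≠ 0 → ∀ (p : Fin n → ℝ) (X : Matrix (Fin n) (Fin n) ℝ),
      X.IsSymm → M x (lam • p) X = |lam| ^ α * M x p X)
    (h2 : ∀ x ∈ Ω, ∀ (p : Fin n → ℝ) (X : Matrix (Fin n) (Fin n) ℝ), X.IsSymm →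
      ∀ γ : ℝ, γ ≠ 0 → ∀ σ : ℝ,
        M x p (γ • X + σ • Matrix.vecMulVec p p)
          = γ ^ (β + 1) * M x p X + σ * γ ^ β * N x p X)
    (Φinv : ℝ → ℝ) (hleft : ∀ t : ℝ, Φinv (Phig g t) = t)
    (hright : ∀ s : ℝ, Phig g (Φinv s) = s)
    (u : (Fin n → ℝ) → ℝ) (hu : ContDiffOn ℝ 2 u Ω)
    (hsol : ∀ x ∈ Ω,
      M x (vgrad u x) (vhess u x) + g (u x) * N x (vgrad u x) (vhess u x) + f x (u x) = 0) :
    ∀ x ∈ Ω,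
      M x (vgrad (Phig g ∘ u) x) (vhess (Phig g ∘ u) x)
        + Real.exp ((α + (β : ℝ) + 1) * Gg g (Φinv ((Phig g ∘ u) x)))
            * f x (Φinv ((Phig g ∘ u) x)) = 0 :=
  stmt4_general Ω hΩ f g hg M N α β h1 h2 Φinv hleft u hu hsol
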